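/- arXiv:2410.23969 — 3 statements merged into one kernel-verified Lean document; each statement's English description precedes it below -/
import Mathlib

section
/- Let p ∈ [1, ∞), let 1 ≤ k ≤ d, let ρ be a d×d density matrix with eigenvalues α₁ ≥ α₂ ≥ … ≥ α_d in non-increasing order, and let A ∈ ℂ^{d×d} be a positive semidefinite matrix of rank at most k. Then ‖ρ − A‖_p^p ≥ Σ_{i=k+1}^d α_i^p. -/
open Matrix
open scoped ComplexOrder

/-- The singular values of a complex square matrix `M`: the square roots of the
eigenvalues of `Mᴴ * M` (in the order provided by the spectral theorem). -/
noncomputable def singularValues {d : ℕ} (M : Matrix (Fin d) (Fin d) ℂ) : Fin d → ℝ :=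
  fun i => Real.sqrt ((Matrix.isHermitian_conjTranspose_mul_self M).eigenvalues i)

/-- The Schatten `p`-norm of a complex square matrix, `(∑ i, sᵢ(M)^p)^(1/p)`. -/
noncomputable def schattenNorm {d : ℕ} (p : ℝ) (M : Matrix (Fin d) (Fin d) ℂ) : ℝ :=
  (∑ i, singularValues M i ^ p) ^ (1 / p)

/-
Weyl's inequality for a rank-`k` perturbation: if `α` and `β` list the eigenvalues of `ρ` and of
`B = ρ - A` in non-increasing order, then `α i ≤ β (i - k)` for `i ≥ k`. Indeed the span of the
top `i + 1` eigenvectors of `ρ`, the kernel of `A` (codimension `≤ k`) and the span of the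
eigenvectors of `B` from index `i - k` on have dimensions adding up to more than `2 d`, so they
share a vector `x ≠ 0`, and `α i ‖x‖² ≤ x*ρx = x*Bx ≤ β (i - k) ‖x‖²`. As `B` is Hermitian, its
singular values are the `|β j|`, and summing `p`-th powers gives the bound.
-/

theorem Submodule.finrank_add_finrank_le_finrank_add_finrank_inf {K V : Type*} [DivisionRing K]
    [AddCommGroup V] [Module K V] [FiniteDimensional K V] (s t : Submodule K V) :
    Module.finrank K s + Module.finrank K t ≤ Module.finrank K V + Module.finrank K ↥(s ⊓ t) := by
  rw [← Submodule.finrank_sup_add_finrank_inf_eq]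
  exact Nat.add_le_add_right (Submodule.finrank_le _) _

theorem Submodule.exists_mem_inf_ne_zero_of_finrank_lt {K V : Type*} [DivisionRing K]
    [AddCommGroup V] [Module K V] [FiniteDimensional K V] {s t : Submodule K V}
    (h : Module.finrank K V < Module.finrank K s + Module.finrank K t) :
    ∃ x ∈ s ⊓ t, x ≠ 0 := by
  by_contra! hst
  exact h.not_ge (Submodule.finrank_add_finrank_le_of_disjoint
    (disjoint_iff.mpr ((Submodule.eq_bot_iff _).mpr hst)))

namespace Matrix

variable {𝕜 n : Type*} [RCLike 𝕜] [Fintype n] [DecidableEq n]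

theorem re_star_dotProduct_conj_diagonal_mulVec (U : Matrix n n 𝕜) (v : n → ℝ) (x : n → 𝕜) :
    RCLike.re (star x ⬝ᵥ (U * diagonal (RCLike.ofReal ∘ v) * star U) *ᵥ x)
      = ∑ m, v m * ‖(star U *ᵥ x) m‖ ^ 2 := by
  have hstar : star x ᵥ* U = star (star U *ᵥ x) := by
    rw [star_mulVec, ← star_eq_conjTranspose, star_star]
  rw [← mulVec_mulVec, ← mulVec_mulVec, dotProduct_mulVec, hstar]
  simp only [dotProduct, mulVec_diagonal, Pi.star_apply, map_sum]
  refine Finset.sum_congr rfl fun m _ => ?_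
  rw [Function.comp_apply, mul_left_comm, RCLike.star_def, RCLike.conj_mul, ← RCLike.ofReal_pow,
    RCLike.re_ofReal_mul, RCLike.ofReal_re]

theorem re_star_dotProduct_self_eq_of_mem_unitaryGroup {U : Matrix n n 𝕜}
    (hU : U ∈ unitaryGroup n 𝕜) (x : n → 𝕜) :
    RCLike.re (star x ⬝ᵥ x) = ∑ m, ‖(star U *ᵥ x) m‖ ^ 2 := by
  simpa [mem_unitaryGroup_iff.mp hU] using re_star_dotProduct_conj_diagonal_mulVec U 1 x

namespace IsHermitian

variable {A : Matrix n n 𝕜} (hA : A.IsHermitian)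

open Polynomial in
theorem map_eigenvalues_eq_of_charpoly_eq {μ : n → ℝ}
    (h : A.charpoly = ∏ i, (X - C (μ i : 𝕜))) :
    Finset.univ.val.map hA.eigenvalues = Finset.univ.val.map μ := by
  have hroots := hA.roots_charpoly_eq_eigenvalues
  rw [h, Polynomial.roots_prod _ _ (by simp [Finset.prod_ne_zero_iff, X_sub_C_ne_zero])] at hroots
  simp only [roots_X_sub_C, Multiset.bind_singleton] at hroots
  apply Multiset.map_injective (RCLike.ofReal_injective (K := 𝕜))
  simpa only [Multiset.map_map, Function.comp_def] using hroots.symm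

theorem re_star_dotProduct_mulVec (x : n → 𝕜) :
    RCLike.re (star x ⬝ᵥ A *ᵥ x)
      = ∑ m, hA.eigenvalues m * ‖(star (hA.eigenvectorUnitary : Matrix n n 𝕜) *ᵥ x) m‖ ^ 2 := by
  conv_lhs => rw [hA.spectral_theorem, Unitary.conjStarAlgAut_apply]
  exact re_star_dotProduct_conj_diagonal_mulVec _ _ _

/-- The span of the eigenvectors `hA.eigenvectorBasis m` with `m ∈ S`, described as the vectors
whose coordinates in that orthonormal basis vanish off `S`. -/
noncomputable def eigenvectorSpan (S : Finset n) : Submodule 𝕜 (n → 𝕜) :=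
  LinearMap.ker (LinearMap.funLeft 𝕜 𝕜 (Subtype.val : {m // m ∉ S} → n) ∘ₗ
    (star (hA.eigenvectorUnitary : Matrix n n 𝕜)).mulVecLin)

theorem mem_eigenvectorSpan {S : Finset n} {x : n → 𝕜} :
    x ∈ hA.eigenvectorSpan S ↔
      ∀ m ∉ S, (star (hA.eigenvectorUnitary : Matrix n n 𝕜) *ᵥ x) m = 0 := by
  simp [eigenvectorSpan, funext_iff, LinearMap.funLeft]

theorem card_le_finrank_eigenvectorSpan (S : Finset n) :
    S.card ≤ Module.finrank 𝕜 (hA.eigenvectorSpan S) := by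
  set f := LinearMap.funLeft 𝕜 𝕜 (Subtype.val : {m // m ∉ S} → n) ∘ₗ
    (star (hA.eigenvectorUnitary : Matrix n n 𝕜)).mulVecLin
  have hrange := Submodule.finrank_le (LinearMap.range f)
  have hnullity := LinearMap.finrank_range_add_finrank_ker f
  have hcard : Fintype.card {m // m ∉ S} = Fintype.card n - S.card := by
    simp
  simp only [Module.finrank_fintype_fun_eq_card, hcard] at hrange hnullity
  have := S.card_le_univ
  change S.card ≤ Module.finrank 𝕜 (LinearMap.ker f)
  omega

theorem mul_re_star_dotProduct_self_le {S : Finset n} {a : ℝ}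
    (ha : ∀ m ∈ S, a ≤ hA.eigenvalues m) {x : n → 𝕜} (hx : x ∈ hA.eigenvectorSpan S) :
    a * RCLike.re (star x ⬝ᵥ x) ≤ RCLike.re (star x ⬝ᵥ A *ᵥ x) := by
  rw [re_star_dotProduct_self_eq_of_mem_unitaryGroup hA.eigenvectorUnitary.2,
    hA.re_star_dotProduct_mulVec, Finset.mul_sum]
  refine Finset.sum_le_sum fun m _ => ?_
  by_cases hm : m ∈ S
  · exact mul_le_mul_of_nonneg_right (ha m hm) (sq_nonneg _)
  · simp [hA.mem_eigenvectorSpan.mp hx m hm]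

theorem re_star_dotProduct_mulVec_le {S : Finset n} {b : ℝ}
    (hb : ∀ m ∈ S, hA.eigenvalues m ≤ b) {x : n → 𝕜} (hx : x ∈ hA.eigenvectorSpan S) :
    RCLike.re (star x ⬝ᵥ A *ᵥ x) ≤ b * RCLike.re (star x ⬝ᵥ x) := by
  rw [re_star_dotProduct_self_eq_of_mem_unitaryGroup hA.eigenvectorUnitary.2,
    hA.re_star_dotProduct_mulVec, Finset.mul_sum]
  refine Finset.sum_le_sum fun m _ => ?_
  by_cases hm : m ∈ S
  · exact mul_le_mul_of_nonneg_right (hb m hm) (sq_nonneg _)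
  · simp [hA.mem_eigenvectorSpan.mp hx m hm]

theorem le_of_card_add_rank_lt {ρ A : Matrix n n 𝕜} (hρ : ρ.IsHermitian)
    (hB : (ρ - A).IsHermitian) {S T : Finset n} {a b : ℝ} (ha : ∀ m ∈ S, a ≤ hρ.eigenvalues m)
    (hb : ∀ m ∈ T, hB.eigenvalues m ≤ b) (hcard : Fintype.card n + A.rank < S.card + T.card) :
    a ≤ b := by
  have hker : A.rank + Module.finrank 𝕜 (LinearMap.ker A.mulVecLin) = Fintype.card n := by
    rw [← Module.finrank_fintype_fun_eq_card 𝕜]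
    exact LinearMap.finrank_range_add_finrank_ker A.mulVecLin
  have hS := hρ.card_le_finrank_eigenvectorSpan S
  have hT := hB.card_le_finrank_eigenvectorSpan T
  have hinf := Submodule.finrank_add_finrank_le_finrank_add_finrank_inf
    (hρ.eigenvectorSpan S) (LinearMap.ker A.mulVecLin)
  obtain ⟨x, hx, hx0⟩ := Submodule.exists_mem_inf_ne_zero_of_finrank_lt
    (s := hρ.eigenvectorSpan S ⊓ LinearMap.ker A.mulVecLin) (t := hB.eigenvectorSpan T)
    (by rw [Module.finrank_fintype_fun_eq_card] at hinf ⊢; omega)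
  obtain ⟨⟨hxS, hxA⟩, hxT⟩ := hx
  have hAx : A *ᵥ x = 0 := hxA
  have hpos : 0 < RCLike.re (star x ⬝ᵥ x) :=
    (RCLike.pos_iff.mp (dotProduct_star_self_pos_iff.mpr hx0)).1
  refine le_of_mul_le_mul_right ?_ hpos
  calc a * RCLike.re (star x ⬝ᵥ x) ≤ RCLike.re (star x ⬝ᵥ ρ *ᵥ x) :=
        hρ.mul_re_star_dotProduct_self_le ha hxS
    _ = RCLike.re (star x ⬝ᵥ (ρ - A) *ᵥ x) := by rw [sub_mulVec, hAx, sub_zero]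
    _ ≤ b * RCLike.re (star x ⬝ᵥ x) := hB.re_star_dotProduct_mulVec_le hb hxT

theorem weyl_le_of_rank_le {d k : ℕ}
    {ρ A : Matrix (Fin d) (Fin d) 𝕜} (hρ : ρ.IsHermitian) (hB : (ρ - A).IsHermitian)
    (hrank : A.rank ≤ k) {α β : Fin d → ℝ} (hα : Antitone α) (hβ : Antitone β)
    {σ τ : Equiv.Perm (Fin d)} (hσ : α = hρ.eigenvalues ∘ σ) (hτ : β = hB.eigenvalues ∘ τ)
    (i : Fin d) (hi : k ≤ (i : ℕ)) :
    α i ≤ β ⟨i - k, (Nat.sub_le _ _).trans_lt i.isLt⟩ := by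
  apply hρ.le_of_card_add_rank_lt hB (S := (Finset.Iic i).map σ.toEmbedding)
    (T := (Finset.Ici ⟨i - k, (Nat.sub_le _ _).trans_lt i.isLt⟩).map τ.toEmbedding)
  · intro m hm
    obtain ⟨l, hl, rfl⟩ := Finset.mem_map.mp hm
    simpa [hσ] using hα (Finset.mem_Iic.mp hl)
  · intro m hm
    obtain ⟨l, hl, rfl⟩ := Finset.mem_map.mp hm
    simpa [hτ] using hβ (Finset.mem_Ici.mp hl)
  · simp only [Finset.card_map, Fin.card_Iic, Fin.card_Ici, Fintype.card_fin]
    omega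

end IsHermitian

end Matrix

theorem Fin.sum_filter_le_sum_of_le_sub {d k : ℕ} {f g : Fin d → ℝ} (hg : ∀ i, 0 ≤ g i)
    (h : ∀ i : Fin d, k ≤ (i : ℕ) → f i ≤ g ⟨i - k, (Nat.sub_le _ _).trans_lt i.isLt⟩) :
    ∑ i ∈ Finset.univ.filter (fun i : Fin d => k ≤ (i : ℕ)), f i ≤ ∑ i, g i := by
  set shift : Fin d → Fin d := fun i => ⟨i - k, (Nat.sub_le _ _).trans_lt i.isLt⟩
  have hinj : Set.InjOn shift (Finset.univ.filter (fun i : Fin d => k ≤ (i : ℕ))) := by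
    intro i hi j hj hij
    have := (Finset.mem_filter.mp hi).2
    have := (Finset.mem_filter.mp hj).2
    simp only [shift, Fin.mk.injEq] at hij
    omega
  calc ∑ i ∈ Finset.univ.filter (fun i : Fin d => k ≤ (i : ℕ)), f i
      ≤ ∑ i ∈ Finset.univ.filter (fun i : Fin d => k ≤ (i : ℕ)), g (shift i) :=
        Finset.sum_le_sum fun i hi => h i (Finset.mem_filter.mp hi).2
    _ = ∑ m ∈ (Finset.univ.filter (fun i : Fin d => k ≤ (i : ℕ))).image shift, g m :=
        (Finset.sum_image hinj).symm
    _ ≤ ∑ m, g m := Finset.sum_le_sum_of_subset_of_nonneg (Finset.subset_univ _) fun m _ _ => hg m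

theorem exists_perm_antitone_comp {d : ℕ} (f : Fin d → ℝ) :
    ∃ τ : Equiv.Perm (Fin d), Antitone (f ∘ τ) :=
  ⟨Tuple.sort (OrderDual.toDual ∘ f), Tuple.monotone_sort (OrderDual.toDual ∘ f)⟩

open Polynomial in
theorem Matrix.IsHermitian.sum_singularValues_rpow {d : ℕ} {B : Matrix (Fin d) (Fin d) ℂ}
    (hB : B.IsHermitian) (p : ℝ) :
    ∑ i, singularValues B i ^ p = ∑ i, |hB.eigenvalues i| ^ p := by
  have hcharpoly : (Bᴴ * B).charpoly = ∏ i, (X - C ((hB.eigenvalues i ^ 2 : ℝ) : ℂ)) := by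
    rw [hB.eq, ← sq, ← cfc_pow_id (R := ℝ) B 2 hB.isSelfAdjoint]
    exact hB.charpoly_cfc_eq _
  have hmap : Finset.univ.val.map (isHermitian_conjTranspose_mul_self B).eigenvalues
      = Finset.univ.val.map fun i => hB.eigenvalues i ^ 2 :=
    (isHermitian_conjTranspose_mul_self B).map_eigenvalues_eq_of_charpoly_eq hcharpoly
  have hsum := congrArg (fun s => (s.map fun t => √t ^ p).sum) hmap
  simp only [Multiset.map_map, Function.comp_def, Real.sqrt_sq_eq_abs] at hsum
  exact hsum

theorem schattenNorm_rpow {d : ℕ} {p : ℝ} (hp : p ≠ 0) (M : Matrix (Fin d) (Fin d) ℂ) :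
    schattenNorm p M ^ p = ∑ i, singularValues M i ^ p := by
  rw [schattenNorm, ← Real.rpow_mul (Finset.sum_nonneg fun i _ =>
    Real.rpow_nonneg (Real.sqrt_nonneg _) p : 0 ≤ ∑ i, singularValues M i ^ p),
    one_div_mul_cancel hp, Real.rpow_one]

theorem rank_k_psd_approximation_lower_bound_general (d k : ℕ)
    (p : ℝ) (hp : 1 ≤ p)
    (ρ : Matrix (Fin d) (Fin d) ℂ) (hρ : ρ.PosSemidef)
    (α : Fin d → ℝ) (hα : Antitone α)
    (hαeig : ∃ σ : Equiv.Perm (Fin d), α = hρ.1.eigenvalues ∘ σ)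
    (A : Matrix (Fin d) (Fin d) ℂ) (hA : A.PosSemidef) (hArank : A.rank ≤ k) :
    ∑ i ∈ Finset.univ.filter (fun i : Fin d => k ≤ (i : ℕ)), α i ^ p
      ≤ schattenNorm p (ρ - A) ^ p := by
  obtain ⟨σ, hσ⟩ := hαeig
  have hB : (ρ - A).IsHermitian := hρ.1.sub hA.1
  obtain ⟨τ, hτ⟩ := exists_perm_antitone_comp hB.eigenvalues
  have hweyl := hρ.1.weyl_le_of_rank_le hB hArank hα hτ hσ rfl
  calc ∑ i ∈ Finset.univ.filter (fun i : Fin d => k ≤ (i : ℕ)), α i ^ p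
      ≤ ∑ m, |hB.eigenvalues (τ m)| ^ p :=
        Fin.sum_filter_le_sum_of_le_sub (fun m => by positivity) fun i hi =>
          Real.rpow_le_rpow (by simpa [hσ] using hρ.eigenvalues_nonneg (σ i))
            ((hweyl i hi).trans (le_abs_self _)) (by linarith)
    _ = ∑ m, |hB.eigenvalues m| ^ p := Equiv.sum_comp τ fun m => |hB.eigenvalues m| ^ p
    _ = schattenNorm p (ρ - A) ^ p := by
        rw [schattenNorm_rpow (by linarith), hB.sum_singularValues_rpow]

/-- If `ρ` is a `d × d` density matrix with eigenvalues `α₀ ≥ α₁ ≥ … ≥ α_{d-1}` and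
`A` is positive semidefinite of rank at most `k`, then
`‖ρ - A‖_p^p ≥ ∑_{i ≥ k} αᵢ^p` (i.e. the sum of the `p`-th powers of
the `d - k` smallest eigenvalues). -/
theorem rank_k_psd_approximation_lower_bound (d k : ℕ) (hk1 : 1 ≤ k) (hkd : k ≤ d)
    (p : ℝ) (hp : 1 ≤ p)
    (ρ : Matrix (Fin d) (Fin d) ℂ) (hρ : ρ.PosSemidef) (hρtr : ρ.trace = 1)
    (α : Fin d → ℝ) (hα : Antitone α)
    (hαeig : ∃ σ : Equiv.Perm (Fin d), α = hρ.1.eigenvalues ∘ σ)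
    (A : Matrix (Fin d) (Fin d) ℂ) (hA : A.PosSemidef) (hArank : A.rank ≤ k) :
    ∑ i ∈ Finset.univ.filter (fun i : Fin d => k ≤ (i : ℕ)), α i ^ p
      ≤ schattenNorm p (ρ - A) ^ p :=
  rank_k_psd_approximation_lower_bound_general d k p hp ρ hρ α hα hαeig A hA hArank
end

section
/- Let p ∈ [1, ∞), 1 ≤ k ≤ d, and let ρ = U diag(α) Uᴴ be a d×d density matrix with eigenvalues α₁ ≥ … ≥ α_d in non-increasing order. Then its rank-k truncation ρ_{1:k} = U diag(α₁,…,α_k,0,…,0) Uᴴ satisfies ‖ρ − ρ_{1:k}‖_p = (Σ_{i=k+1}^d α_i^p)^{1/p}, and ρ_{1:k} is an optimal rank-k positive semidefinite approximation of ρ in Schatten p-norm: for every positive semidefinite A of rank at most k, ‖ρ − A‖_p ≥ ‖ρ − ρ_{1:k}‖_p. -/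
/-!
`ρ - ρ_{1:k} = U diag(0, …, 0, α_k, …, α_{d-1}) Uᴴ`, which gives the formula. For optimality, the
singular values of the Hermitian matrix `ρ - A` are the absolute values of its eigenvalues
`λ₀ ≥ λ₁ ≥ …`, and a perturbation of rank at most `k` lowers the eigenvalues of `ρ` by at most
`k` places: `λⱼ ≥ α_{j+k}` by the max-min principle, because on `span(u₀, …, u_{j+k}) ∩ ker A`
(the `uᵢ` being the columns of `U`), a subspace of dimension `> j`, the Rayleigh quotient of
`ρ - A` is that of `ρ` and hence at least `α_{j+k}`. Summing `|λⱼ|^p ≥ α_{j+k}^p` gives the bound.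
-/

open Matrix
open scoped ComplexOrder

open Polynomial Finset Module
open scoped InnerProductSpace

section Spectrum

variable {𝕜 : Type*} [RCLike 𝕜] {n : Type*} [Fintype n] [DecidableEq n]

theorem Matrix.IsHermitian.sum_comp_eigenvalues_of_charpoly_eq {H : Matrix n n 𝕜}
    (hH : H.IsHermitian) {f : n → ℝ} (hf : H.charpoly = ∏ i, (X - C (f i : 𝕜))) (g : ℝ → ℝ) :
    ∑ i, g (hH.eigenvalues i) = ∑ i, g (f i) := by
  have hroots : univ.val.map (fun i => (hH.eigenvalues i : 𝕜))
      = univ.val.map (fun i => (f i : 𝕜)) := by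
    rw [← Function.comp_def, ← hH.roots_charpoly_eq_eigenvalues, hf, roots_prod]
    · simp
    · simp [Finset.prod_ne_zero_iff, X_sub_C_ne_zero]
  have := congrArg (fun m : Multiset 𝕜 => (m.map fun z => g (RCLike.re z)).sum) hroots
  simp only [Multiset.map_map, Function.comp_def, RCLike.ofReal_re] at this
  exact this

end Spectrum

section SingularValues

variable {d : ℕ}

theorem singularValues_unitary_conj {U : Matrix (Fin d) (Fin d) ℂ}
    (hU : U ∈ unitaryGroup (Fin d) ℂ) (M : Matrix (Fin d) (Fin d) ℂ) :
    singularValues (U * M * Uᴴ) = singularValues M := by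
  have hUU : Uᴴ * U = 1 := mem_unitaryGroup_iff'.mp hU
  have hconj : (U * M * Uᴴ)ᴴ * (U * M * Uᴴ) = U * (Mᴴ * M) * Uᴴ := by
    simp only [conjTranspose_mul, conjTranspose_conjTranspose, mul_assoc, ← mul_assoc Uᴴ U, hUU,
      one_mul]
  have hcharpoly : ((U * M * Uᴴ)ᴴ * (U * M * Uᴴ)).charpoly = (Mᴴ * M).charpoly := by
    rw [hconj, charpoly_mul_comm, ← mul_assoc, hUU, one_mul]
  unfold singularValues
  rw [((isHermitian_conjTranspose_mul_self _).eigenvalues_eq_eigenvalues_iff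
    (isHermitian_conjTranspose_mul_self M)).mpr hcharpoly]

theorem sum_comp_singularValues_diagonal (c : Fin d → ℂ) (g : ℝ → ℝ) :
    ∑ i, g (singularValues (diagonal c) i) = ∑ i, g ‖c i‖ := by
  have hcharpoly : ((diagonal c)ᴴ * diagonal c).charpoly
      = ∏ i, (X - C (RCLike.ofReal (‖c i‖ ^ 2) : ℂ)) := by
    rw [diagonal_conjTranspose, diagonal_mul_diagonal, charpoly_diagonal]
    congr! with i
    simp [Complex.conj_mul']
  simp only [singularValues]
  rw [(isHermitian_conjTranspose_mul_self _).sum_comp_eigenvalues_of_charpoly_eq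
    (f := fun i => ‖c i‖ ^ 2) hcharpoly (fun t => g √t)]
  simp only [Real.sqrt_sq (norm_nonneg _)]

theorem Matrix.IsHermitian.sum_comp_singularValues {H : Matrix (Fin d) (Fin d) ℂ}
    (hH : H.IsHermitian) (g : ℝ → ℝ) : ∑ i, g (singularValues H i) = ∑ i, g |hH.eigenvalues i| := by
  conv_lhs => rw [hH.spectral_theorem, Unitary.conjStarAlgAut_apply]
  rw [star_eq_conjTranspose, singularValues_unitary_conj hH.eigenvectorUnitary.2,
    sum_comp_singularValues_diagonal]
  simp

end SingularValues

section Rayleigh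

variable {𝕜 E ι : Type*} [RCLike 𝕜] [NormedAddCommGroup E] [InnerProductSpace 𝕜 E] [Fintype ι]
  (b : OrthonormalBasis ι 𝕜 E) {T : E →ₗ[𝕜] E} {μ : ι → ℝ}

theorem OrthonormalBasis.re_inner_map_self_eq_sum (hT : ∀ i, T (b i) = (μ i : 𝕜) • b i) (x : E) :
    RCLike.re ⟪x, T x⟫_𝕜 = ∑ i, μ i * ‖b.repr x i‖ ^ 2 := by
  have hTx : T x = ∑ i, ((μ i : 𝕜) * b.repr x i) • b i := by
    conv_lhs => rw [← b.sum_repr x]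
    simp only [map_sum, map_smul, hT, smul_smul, mul_comm]
  rw [hTx, inner_sum, map_sum]
  refine sum_congr rfl fun i _ => ?_
  rw [inner_smul_right, ← inner_conj_symm, ← b.repr_apply_apply, mul_assoc, RCLike.mul_conj,
    ← RCLike.ofReal_pow, RCLike.re_ofReal_mul, RCLike.ofReal_re]

theorem OrthonormalBasis.repr_eq_zero_of_mem_span {s : Set ι} {x : E}
    (hx : x ∈ Submodule.span 𝕜 (b '' s)) {i : ι} (hi : i ∉ s) : b.repr x i = 0 := by
  have := b.toBasis.mem_span_image.mp (by simpa using hx)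
  simpa using Finsupp.notMem_support_iff.mp fun h => hi (this h)

theorem OrthonormalBasis.le_re_inner_map_self_of_mem_span (hT : ∀ i, T (b i) = (μ i : 𝕜) • b i)
    {s : Set ι} {c : ℝ} (hc : ∀ i ∈ s, c ≤ μ i) {x : E} (hx : x ∈ Submodule.span 𝕜 (b '' s)) :
    c * ‖x‖ ^ 2 ≤ RCLike.re ⟪x, T x⟫_𝕜 := by
  rw [b.re_inner_map_self_eq_sum hT, ← b.repr.norm_map, EuclideanSpace.norm_sq_eq, mul_sum]
  refine sum_le_sum fun i _ => ?_
  by_cases hi : i ∈ s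
  · exact mul_le_mul_of_nonneg_right (hc i hi) (sq_nonneg _)
  · simp [b.repr_eq_zero_of_mem_span hx hi]

theorem OrthonormalBasis.re_inner_map_self_le_of_mem_span (hT : ∀ i, T (b i) = (μ i : 𝕜) • b i)
    {s : Set ι} {c : ℝ} (hc : ∀ i ∈ s, μ i ≤ c) {x : E} (hx : x ∈ Submodule.span 𝕜 (b '' s)) :
    RCLike.re ⟪x, T x⟫_𝕜 ≤ c * ‖x‖ ^ 2 := by
  rw [b.re_inner_map_self_eq_sum hT, ← b.repr.norm_map, EuclideanSpace.norm_sq_eq, mul_sum]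
  refine sum_le_sum fun i _ => ?_
  by_cases hi : i ∈ s
  · exact mul_le_mul_of_nonneg_right (hc i hi) (sq_nonneg _)
  · simp [b.repr_eq_zero_of_mem_span hx hi]

theorem OrthonormalBasis.finrank_span_image (s : Finset ι) :
    finrank 𝕜 (Submodule.span 𝕜 (b '' s)) = #s := by
  rw [Set.image_eq_range]
  exact (finrank_span_eq_card
    (b.orthonormal.linearIndependent.comp ((↑) : s → ι) Subtype.val_injective)).trans (by simp)

end Rayleigh

section MinMax

variable {𝕜 E : Type*} [RCLike 𝕜] [NormedAddCommGroup E] [InnerProductSpace 𝕜 E]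
  [FiniteDimensional 𝕜 E] {n : ℕ}

theorem LinearMap.IsSymmetric.le_eigenvalues_of_le_re_inner {T : E →ₗ[𝕜] E} (hT : T.IsSymmetric)
    (hn : finrank 𝕜 E = n) (j : Fin n) {V : Submodule 𝕜 E} (hV : (j : ℕ) < finrank 𝕜 V) {c : ℝ}
    (hc : ∀ x ∈ V, c * ‖x‖ ^ 2 ≤ RCLike.re ⟪x, T x⟫_𝕜) : c ≤ hT.eigenvalues hn j := by
  set b := hT.eigenvectorBasis hn
  set S := Submodule.span 𝕜 (b '' (Finset.Ici j : Set (Fin n)))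
  have hS : finrank 𝕜 S = n - j := by rw [b.finrank_span_image, Fin.card_Ici]
  obtain ⟨x, hxV, hxS, hx0⟩ : ∃ x ∈ V, x ∈ S ∧ x ≠ 0 := by
    by_contra! h
    have := Submodule.finrank_add_finrank_le_of_disjoint (Submodule.disjoint_def.mpr h)
    omega
  have hupper := b.re_inner_map_self_le_of_mem_span (hT.apply_eigenvectorBasis hn)
    (fun i hi => hT.eigenvalues_antitone hn (by simpa using hi)) hxS
  exact le_of_mul_le_mul_right ((hc x hxV).trans hupper) (by positivity)

theorem LinearMap.IsSymmetric.le_eigenvalues_sub_of_finrank_range_le {m k : ℕ}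
    {S T F : E →ₗ[𝕜] E} (hS : S.IsSymmetric) (hn : finrank 𝕜 E = n) (hSTF : S = T - F)
    (hF : finrank 𝕜 (range F) ≤ k) (b : OrthonormalBasis (Fin m) 𝕜 E) {α : Fin m → ℝ}
    (hα : Antitone α) (hTb : ∀ i, T (b i) = (α i : 𝕜) • b i) (i : Fin m) (j : Fin n)
    (hij : (i : ℕ) = j + k) : α i ≤ hS.eigenvalues hn j := by
  set W := Submodule.span 𝕜 (b '' (Finset.Iic i : Set (Fin m)))
  have hW : finrank 𝕜 W = i + 1 := by rw [b.finrank_span_image, Fin.card_Iic]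
  have hker := LinearMap.finrank_range_add_finrank_ker F
  have hsup := Submodule.finrank_sup_add_finrank_inf_eq W (ker F)
  have hle := Submodule.finrank_le (W ⊔ ker F)
  refine hS.le_eigenvalues_of_le_re_inner hn j (V := W ⊓ ker F) (by omega) fun x hx => ?_
  have hSx : S x = T x := by simp [hSTF, LinearMap.mem_ker.mp hx.2]
  rw [hSx]
  exact b.le_re_inner_map_self_of_mem_span hTb (fun l hl => hα (by simpa using hl)) hx.1

end MinMax

section Perturbation

variable {𝕜 : Type*} [RCLike 𝕜] {d : ℕ}

theorem Matrix.toEuclideanLin_diagonal_basisFun (c : Fin d → 𝕜) (i : Fin d) :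
    toEuclideanLin (diagonal c) (EuclideanSpace.basisFun (Fin d) 𝕜 i)
      = c i • EuclideanSpace.basisFun (Fin d) 𝕜 i := by
  ext l
  by_cases h : l = i <;> simp [toLpLin_apply, h]

theorem Matrix.le_eigenvalues₀_diagonal_sub {α : Fin d → ℝ} (hα : Antitone α) {k : ℕ}
    {B : Matrix (Fin d) (Fin d) 𝕜} (hB : B.rank ≤ k)
    (hH : (diagonal (fun i => (α i : 𝕜)) - B).IsHermitian) (i : Fin d)
    (j : Fin (Fintype.card (Fin d))) (hij : (i : ℕ) = j + k) : α i ≤ hH.eigenvalues₀ j := by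
  have hrank : finrank 𝕜 (LinearMap.range (toEuclideanLin B)) ≤ k := by
    rwa [toEuclideanLin_eq_toLin_orthonormal, ← rank_eq_finrank_range_toLin]
  exact LinearMap.IsSymmetric.le_eigenvalues_sub_of_finrank_range_le _ _ (map_sub _ _ _) hrank
    (EuclideanSpace.basisFun (Fin d) 𝕜) hα (toEuclideanLin_diagonal_basisFun _) i j hij

end Perturbation

section Truncation

variable {d : ℕ}

theorem Matrix.PosSemidef.nonneg_of_unitary_conj_diagonal {𝕜 n : Type*} [RCLike 𝕜] [Fintype n]
    [DecidableEq n] {U : Matrix n n 𝕜} (hU : U ∈ unitaryGroup n 𝕜) {α : n → ℝ}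
    (hρ : (U * diagonal (fun i => (α i : 𝕜)) * Uᴴ).PosSemidef) (i : n) : 0 ≤ α i := by
  have hUU : Uᴴ * U = 1 := mem_unitaryGroup_iff'.mp hU
  have hdiag := hρ.conjTranspose_mul_mul_same U
  rw [show Uᴴ * (U * diagonal (fun i => (α i : 𝕜)) * Uᴴ) * U = diagonal (fun i => (α i : 𝕜)) by
    simp only [mul_assoc, hUU, mul_one]; simp only [← mul_assoc, hUU, one_mul]] at hdiag
  exact RCLike.ofReal_nonneg.mp (posSemidef_diagonal_iff.mp hdiag i)

theorem sum_filter_rpow_le_sum_abs_rpow {n k : ℕ} (hdn : d ≤ n) {α : Fin d → ℝ}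
    (hα0 : ∀ i, 0 ≤ α i) {μ : Fin n → ℝ}
    (hαμ : ∀ (i : Fin d) (j : Fin n), (i : ℕ) = j + k → α i ≤ μ j) {p : ℝ} (hp : 0 ≤ p) :
    ∑ i ∈ univ.filter (fun i : Fin d => k ≤ (i : ℕ)), α i ^ p ≤ ∑ j, |μ j| ^ p := by
  let e : Fin d → Fin n := fun i => ⟨i - k, by omega⟩
  calc ∑ i ∈ univ.filter (fun i : Fin d => k ≤ (i : ℕ)), α i ^ p
      ≤ ∑ i ∈ univ.filter (fun i : Fin d => k ≤ (i : ℕ)), |μ (e i)| ^ p := by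
        refine sum_le_sum fun i hi => Real.rpow_le_rpow (hα0 i) ?_ hp
        exact (hαμ i (e i) (by simp [e] at hi ⊢; omega)).trans (le_abs_self _)
    _ = ∑ j ∈ (univ.filter (fun i : Fin d => k ≤ (i : ℕ))).image e, |μ j| ^ p := by
        rw [sum_image]
        intro i hi i' hi' h
        simp [e, Fin.ext_iff] at hi hi' h ⊢
        omega
    _ ≤ ∑ j, |μ j| ^ p :=
        sum_le_sum_of_subset_of_nonneg (subset_univ _) fun _ _ _ => by positivity

theorem sum_filter_rpow_le_sum_singularValues_rpow_sub {U : Matrix (Fin d) (Fin d) ℂ}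
    (hU : U ∈ unitaryGroup (Fin d) ℂ) {α : Fin d → ℝ} (hα : Antitone α) (hα0 : ∀ i, 0 ≤ α i)
    {k : ℕ} {A : Matrix (Fin d) (Fin d) ℂ} (hA : A.IsHermitian) (hrank : A.rank ≤ k) {p : ℝ}
    (hp : 0 ≤ p) :
    ∑ i ∈ univ.filter (fun i : Fin d => k ≤ (i : ℕ)), α i ^ p
      ≤ ∑ i, singularValues (U * diagonal (fun i => (α i : ℂ)) * Uᴴ - A) i ^ p := by
  set A' := Uᴴ * A * U
  have hconj : U * diagonal (fun i => (α i : ℂ)) * Uᴴ - A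
      = U * (diagonal (fun i => (α i : ℂ)) - A') * Uᴴ := by
    have hUU : U * Uᴴ = 1 := mem_unitaryGroup_iff.mp hU
    simp only [A', mul_sub, sub_mul, ← mul_assoc, hUU, one_mul]
    simp only [mul_assoc, hUU, mul_one]
  have hH : (diagonal (fun i => (α i : ℂ)) - A').IsHermitian :=
    (isHermitian_diagonal_of_self_adjoint _ (by ext; simp)).sub
      (isHermitian_conjTranspose_mul_mul U hA)
  have hrank' : A'.rank ≤ k :=
    ((rank_mul_le_left _ _).trans (rank_mul_le_right _ _)).trans hrank
  rw [hconj, singularValues_unitary_conj hU, hH.sum_comp_singularValues (· ^ p)]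
  refine (sum_filter_rpow_le_sum_abs_rpow (by simp) hα0
    (le_eigenvalues₀_diagonal_sub hα hrank' hH) hp).trans_eq ?_
  exact ((Fintype.equivOfCardEq (Fintype.card_fin _)).symm.sum_comp
    fun j => |hH.eigenvalues₀ j| ^ p).symm

end Truncation

theorem schattenNorm_unitary_conj_diagonal {d : ℕ} {U : Matrix (Fin d) (Fin d) ℂ}
    (hU : U ∈ unitaryGroup (Fin d) ℂ) (c : Fin d → ℂ) (p : ℝ) :
    schattenNorm p (U * diagonal c * Uᴴ) = (∑ i, ‖c i‖ ^ p) ^ (1 / p) := by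
  rw [schattenNorm, singularValues_unitary_conj hU, sum_comp_singularValues_diagonal c (· ^ p)]

theorem rank_k_truncation_optimal_general (d k : ℕ)
    (p : ℝ) (hp : 1 ≤ p)
    (U : Matrix (Fin d) (Fin d) ℂ) (hU : U ∈ Matrix.unitaryGroup (Fin d) ℂ)
    (α : Fin d → ℝ) (hα : Antitone α)
    (ρ : Matrix (Fin d) (Fin d) ℂ)
    (hρdef : ρ = U * Matrix.diagonal (fun i => (α i : ℂ)) * Uᴴ)
    (hρ : ρ.PosSemidef)
    (ρtrunc : Matrix (Fin d) (Fin d) ℂ)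
    (htrunc : ρtrunc =
      U * Matrix.diagonal (fun i : Fin d => if (i : ℕ) < k then (α i : ℂ) else 0) * Uᴴ) :
    schattenNorm p (ρ - ρtrunc)
        = (∑ i ∈ Finset.univ.filter (fun i : Fin d => k ≤ (i : ℕ)), α i ^ p) ^ (1 / p)
      ∧ ∀ A : Matrix (Fin d) (Fin d) ℂ, A.PosSemidef → A.rank ≤ k →
          schattenNorm p (ρ - ρtrunc) ≤ schattenNorm p (ρ - A) := by
  have hα0 := (hρdef ▸ hρ).nonneg_of_unitary_conj_diagonal hU
  have hdiff : ρ - ρtrunc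
      = U * diagonal (fun i : Fin d => if (i : ℕ) < k then 0 else (α i : ℂ)) * Uᴴ := by
    rw [hρdef, htrunc, ← sub_mul, ← mul_sub, diagonal_sub]
    congr! 3
    ext i
    split_ifs <;> simp
  have htail : schattenNorm p (ρ - ρtrunc)
      = (∑ i ∈ univ.filter (fun i : Fin d => k ≤ (i : ℕ)), α i ^ p) ^ (1 / p) := by
    rw [hdiff, schattenNorm_unitary_conj_diagonal hU, sum_filter]
    congr! 2 with i
    split_ifs <;> first
      | omega
      | simp [Real.zero_rpow (by linarith : p ≠ 0), abs_of_nonneg (hα0 i)]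
  refine ⟨htail, fun A hA hrank => ?_⟩
  rw [htail, schattenNorm, hρdef]
  exact Real.rpow_le_rpow (sum_nonneg fun i _ => Real.rpow_nonneg (hα0 i) p)
    (sum_filter_rpow_le_sum_singularValues_rpow_sub hU hα hα0 hA.1 hrank (by linarith))
    (by positivity)

/-- The rank-`k` truncation `ρ_{1:k} = U diag(α₀,…,α_{k-1},0,…,0) Uᴴ` of a density matrix
`ρ = U diag(α) Uᴴ` (eigenvalues `α` non-increasing) satisfies
`‖ρ - ρ_{1:k}‖_p = (∑_{i ≥ k} αᵢ^p)^(1/p)`, and it is an optimal rank-`k` positive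
semidefinite approximation of `ρ` in Schatten `p`-norm. -/
theorem rank_k_truncation_optimal (d k : ℕ) (hk1 : 1 ≤ k) (hkd : k ≤ d)
    (p : ℝ) (hp : 1 ≤ p)
    (U : Matrix (Fin d) (Fin d) ℂ) (hU : U ∈ Matrix.unitaryGroup (Fin d) ℂ)
    (α : Fin d → ℝ) (hα : Antitone α)
    (ρ : Matrix (Fin d) (Fin d) ℂ)
    (hρdef : ρ = U * Matrix.diagonal (fun i => (α i : ℂ)) * Uᴴ)
    (hρ : ρ.PosSemidef) (hρtr : ρ.trace = 1)
    (ρtrunc : Matrix (Fin d) (Fin d) ℂ)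
    (htrunc : ρtrunc =
      U * Matrix.diagonal (fun i : Fin d => if (i : ℕ) < k then (α i : ℂ) else 0) * Uᴴ) :
    schattenNorm p (ρ - ρtrunc)
        = (∑ i ∈ Finset.univ.filter (fun i : Fin d => k ≤ (i : ℕ)), α i ^ p) ^ (1 / p)
      ∧ ∀ A : Matrix (Fin d) (Fin d) ℂ, A.PosSemidef → A.rank ≤ k →
          schattenNorm p (ρ - ρtrunc) ≤ schattenNorm p (ρ - A) :=
  rank_k_truncation_optimal_general d k p hp U hU α hα ρ hρdef hρ ρtrunc htrunc
end

section
/- Let ρ be a d×d density matrix, U a d×d unitary matrix, α ∈ ℝ^d with α₁ ≥ α₂ ≥ … ≥ α_d ≥ 0, 1 ≤ k ≤ d, and let Π be the diagonal projection onto the first k standard basis vectors. Then ‖U diag(α₁,…,α_k,0,…,0) Uᴴ − ρ‖₁ ≤ √(2k) · ‖diag(α) − Uᴴ ρ U‖₂ + 1 − tr(Π Uᴴ ρ U). -/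
open Matrix
open scoped ComplexOrder

open scoped InnerProductSpace

/-!
Put `σ = Uᴴ ρ U`, `X = diag α - σ` and `Q = 1 - Π`. Entrywise,
`diag(α₁,…,α_k,0,…,0) - σ = (Π X + Q X Π) - Q σ Q`. The first summand has rank at most `2k` and
each of its entries is an entry of `X` or zero, so Cauchy–Schwarz on its singular values bounds its
trace norm by `√(2k) ‖X‖₂`. The second is positive semidefinite, so its trace norm is its trace
`1 - tr(Π σ)`. Both the triangle inequality and unitary invariance of the trace norm come from its
variational form `‖M‖₁ = max ∑ᵢ Re ⟪uᵢ, M vᵢ⟫` over pairs of orthonormal families `u`, `v`.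
-/

lemma Matrix.rank_add_le {m n K : Type*} [Fintype m] [Fintype n] [Field K]
    (A B : Matrix m n K) : (A + B).rank ≤ A.rank + B.rank := by
  have hrange : LinearMap.range (A + B).mulVecLin
      ≤ LinearMap.range A.mulVecLin ⊔ LinearMap.range B.mulVecLin := by
    rintro y ⟨x, rfl⟩
    rw [mulVecLin_add]
    exact Submodule.add_mem_sup ⟨x, rfl⟩ ⟨x, rfl⟩
  exact (Submodule.finrank_mono hrange).trans (Submodule.finrank_add_le_finrank_add_finrank _ _)

section EuclideanCLM

variable {𝕜 n : Type*} [RCLike 𝕜] [Fintype n] [DecidableEq n]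

local notation "𝐓" => toEuclideanCLM (𝕜 := 𝕜) (n := n)

lemma Matrix.inner_toEuclideanCLM_conjTranspose (A : Matrix n n 𝕜) (x y : EuclideanSpace 𝕜 n) :
    ⟪x, 𝐓 Aᴴ y⟫_𝕜 = ⟪𝐓 A x, y⟫_𝕜 := by
  rw [← star_eq_conjTranspose, map_star, ContinuousLinearMap.star_eq_adjoint,
    ContinuousLinearMap.adjoint_inner_right]

lemma Matrix.inner_toEuclideanCLM_toEuclideanCLM (A : Matrix n n 𝕜) (x y : EuclideanSpace 𝕜 n) :
    ⟪𝐓 A x, 𝐓 A y⟫_𝕜 = ⟪x, 𝐓 (Aᴴ * A) y⟫_𝕜 := by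
  rw [map_mul, mul_apply_eq_comp, inner_toEuclideanCLM_conjTranspose]

lemma Matrix.inner_toEuclideanCLM_unitary {V : Matrix n n 𝕜} (hV : V ∈ unitaryGroup n 𝕜)
    (x y : EuclideanSpace 𝕜 n) : ⟪𝐓 V x, 𝐓 V y⟫_𝕜 = ⟪x, y⟫_𝕜 := by
  rw [inner_toEuclideanCLM_toEuclideanCLM, ← star_eq_conjTranspose,
    Unitary.star_mul_self_of_mem hV, map_one, one_apply_eq_self]

end EuclideanCLM

section SingularValues

variable {d : ℕ}

local notation "𝐓" => toEuclideanCLM (𝕜 := ℂ) (n := Fin d)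

lemma singularValues_nonneg (M : Matrix (Fin d) (Fin d) ℂ) (i : Fin d) :
    0 ≤ singularValues M i :=
  Real.sqrt_nonneg _

lemma sq_singularValues (M : Matrix (Fin d) (Fin d) ℂ) (i : Fin d) :
    singularValues M i ^ 2 = (isHermitian_conjTranspose_mul_self M).eigenvalues i :=
  Real.sq_sqrt (eigenvalues_conjTranspose_mul_self_nonneg M i)

lemma schattenNorm_nonneg (p : ℝ) (M : Matrix (Fin d) (Fin d) ℂ) : 0 ≤ schattenNorm p M :=
  Real.rpow_nonneg (Finset.sum_nonneg fun i _ => Real.rpow_nonneg (singularValues_nonneg M i) p) _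

lemma schattenNorm_one_eq_sum_singularValues (M : Matrix (Fin d) (Fin d) ℂ) :
    schattenNorm 1 M = ∑ j, singularValues M j := by
  simp only [schattenNorm, Real.rpow_one, div_one]

lemma schattenNorm_two_eq_sqrt_sum_sq_singularValues (M : Matrix (Fin d) (Fin d) ℂ) :
    schattenNorm 2 M = √(∑ j, singularValues M j ^ 2) := by
  simp only [schattenNorm, Real.sqrt_eq_rpow, ← Real.rpow_natCast, Nat.cast_ofNat]

lemma sum_singularValues_eq_re_trace_cfc_sqrt (M : Matrix (Fin d) (Fin d) ℂ) :
    ∑ i, singularValues M i = (cfc Real.sqrt (Mᴴ * M)).trace.re := by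
  rw [(isHermitian_conjTranspose_mul_self M).cfc_eq, IsHermitian.cfc,
    Unitary.conjStarAlgAut_apply, trace_mul_cycle, Unitary.star_mul_self_of_mem (SetLike.coe_mem _),
    one_mul, trace_diagonal, Complex.re_sum]
  rfl

lemma Matrix.PosSemidef.sum_singularValues_eq_re_trace {R : Matrix (Fin d) (Fin d) ℂ}
    (hR : R.PosSemidef) : ∑ i, singularValues R i = R.trace.re := by
  have hsa : IsSelfAdjoint R := hR.1
  have hspec : ∀ x ∈ spectrum ℝ R, 0 ≤ x := by
    intro x hx
    rw [hR.1.spectrum_real_eq_range_eigenvalues] at hx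
    obtain ⟨i, rfl⟩ := hx
    exact hR.eigenvalues_nonneg i
  have : cfc Real.sqrt (Rᴴ * R) = R := by
    rw [hR.1.eq, ← cfc_id' ℝ R, ← cfc_mul .., ← cfc_comp' ..]
    exact cfc_congr fun x hx => Real.sqrt_mul_self (hspec x hx)
  rw [sum_singularValues_eq_re_trace_cfc_sqrt, this]

lemma Matrix.PosSemidef.schattenNorm_one_eq_re_trace {R : Matrix (Fin d) (Fin d) ℂ}
    (hR : R.PosSemidef) : schattenNorm 1 R = R.trace.re := by
  rw [schattenNorm_one_eq_sum_singularValues, hR.sum_singularValues_eq_re_trace]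

lemma re_trace_conjTranspose_mul_self (M : Matrix (Fin d) (Fin d) ℂ) :
    (Mᴴ * M).trace.re = ∑ i, ∑ j, ‖M i j‖ ^ 2 := by
  rw [trace, Complex.re_sum, Finset.sum_comm]
  refine Finset.sum_congr rfl fun j _ => ?_
  rw [diag_apply, mul_apply, Complex.re_sum]
  refine Finset.sum_congr rfl fun i _ => ?_
  rw [conjTranspose_apply, RCLike.star_def, mul_comm, Complex.mul_conj, Complex.normSq_eq_norm_sq]
  exact Complex.ofReal_re _

lemma sum_sq_singularValues (M : Matrix (Fin d) (Fin d) ℂ) :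
    ∑ j, singularValues M j ^ 2 = ∑ i, ∑ j, ‖M i j‖ ^ 2 := by
  rw [← re_trace_conjTranspose_mul_self,
    (isHermitian_conjTranspose_mul_self M).trace_eq_sum_eigenvalues]
  simp [sq_singularValues]

lemma schattenNorm_two_eq_sqrt_sum_norm_sq (M : Matrix (Fin d) (Fin d) ℂ) :
    schattenNorm 2 M = √(∑ i, ∑ j, ‖M i j‖ ^ 2) := by
  rw [schattenNorm_two_eq_sqrt_sum_sq_singularValues, sum_sq_singularValues]

lemma schattenNorm_two_le_of_forall_eq_zero_or_eq {A B : Matrix (Fin d) (Fin d) ℂ}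
    (h : ∀ i j, A i j = 0 ∨ A i j = B i j) : schattenNorm 2 A ≤ schattenNorm 2 B := by
  rw [schattenNorm_two_eq_sqrt_sum_norm_sq, schattenNorm_two_eq_sqrt_sum_norm_sq]
  gcongr with i _ j _
  rcases h i j with h | h <;> simp [h]

lemma card_singularValues_ne_zero (M : Matrix (Fin d) (Fin d) ℂ) :
    Fintype.card {j // singularValues M j ≠ 0} = M.rank := by
  rw [← rank_conjTranspose_mul_self,
    (isHermitian_conjTranspose_mul_self M).rank_eq_card_non_zero_eigs]
  refine Fintype.card_congr (Equiv.subtypeEquivRight fun j => ?_)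
  rw [singularValues, Real.sqrt_ne_zero (eigenvalues_conjTranspose_mul_self_nonneg M j)]

lemma schattenNorm_one_le_sqrt_rank_mul_schattenNorm_two (M : Matrix (Fin d) (Fin d) ℂ) :
    schattenNorm 1 M ≤ √M.rank * schattenNorm 2 M := by
  classical
  set s := Finset.univ.filter fun j => singularValues M j ≠ 0
  have hcard : s.card = M.rank := by
    rw [← card_singularValues_ne_zero, Fintype.card_subtype]
  rw [schattenNorm_one_eq_sum_singularValues, schattenNorm_two_eq_sqrt_sum_sq_singularValues,
    ← Real.sqrt_mul (Nat.cast_nonneg _), ← Finset.sum_filter_of_ne fun _ _ h => h]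
  refine Real.le_sqrt_of_sq_le (sq_sum_le_card_mul_sum_sq.trans ?_)
  rw [hcard]
  exact mul_le_mul_of_nonneg_left (Finset.sum_le_sum_of_subset_of_nonneg (Finset.subset_univ s)
    fun _ _ _ => sq_nonneg _) (Nat.cast_nonneg _)

noncomputable def rightSingularBasis (M : Matrix (Fin d) (Fin d) ℂ) :
    OrthonormalBasis (Fin d) ℂ (EuclideanSpace ℂ (Fin d)) :=
  (isHermitian_conjTranspose_mul_self M).eigenvectorBasis

-- Zero when `singularValues M i = 0`, since `0⁻¹ = 0`.
noncomputable def leftSingularVector (M : Matrix (Fin d) (Fin d) ℂ) (i : Fin d) :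
    EuclideanSpace ℂ (Fin d) :=
  ((singularValues M i)⁻¹ : ℂ) • 𝐓 M (rightSingularBasis M i)

lemma inner_toEuclideanCLM_rightSingularBasis (M : Matrix (Fin d) (Fin d) ℂ) (i j : Fin d) :
    ⟪𝐓 M (rightSingularBasis M i), 𝐓 M (rightSingularBasis M j)⟫_ℂ =
      if i = j then (singularValues M j : ℂ) ^ 2 else 0 := by
  have heig : 𝐓 (Mᴴ * M) (rightSingularBasis M j) =
      ((singularValues M j : ℂ) ^ 2) • rightSingularBasis M j := by
    ext1
    rw [ofLp_toEuclideanCLM, rightSingularBasis, IsHermitian.mulVec_eigenvectorBasis,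
      ← sq_singularValues, WithLp.ofLp_smul, ← Complex.ofReal_pow,
      RCLike.real_smul_eq_coe_smul (K := ℂ)]
    rfl
  rw [inner_toEuclideanCLM_toEuclideanCLM, heig, inner_smul_right,
    orthonormal_iff_ite.mp (rightSingularBasis M).orthonormal]
  split_ifs <;> simp

lemma norm_toEuclideanCLM_rightSingularBasis (M : Matrix (Fin d) (Fin d) ℂ) (i : Fin d) :
    ‖𝐓 M (rightSingularBasis M i)‖ = singularValues M i := by
  have h := inner_toEuclideanCLM_rightSingularBasis M i i
  rw [if_pos rfl, inner_self_eq_norm_sq_to_K] at h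
  exact (pow_left_inj₀ (norm_nonneg _) (singularValues_nonneg M i) two_ne_zero).mp
    (RCLike.ofReal_injective (K := ℂ) (by simpa using h))

lemma toEuclideanCLM_rightSingularBasis (M : Matrix (Fin d) (Fin d) ℂ) (i : Fin d) :
    𝐓 M (rightSingularBasis M i) =
      (singularValues M i : ℂ) • leftSingularVector M i := by
  by_cases h : singularValues M i = 0
  · rw [h, Complex.ofReal_zero, zero_smul, ← norm_eq_zero,
      norm_toEuclideanCLM_rightSingularBasis, h]
  · rw [leftSingularVector, smul_smul, ← Complex.ofReal_inv, ← Complex.ofReal_mul,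
      mul_inv_cancel₀ h, Complex.ofReal_one, one_smul]

lemma norm_leftSingularVector_le_one (M : Matrix (Fin d) (Fin d) ℂ) (i : Fin d) :
    ‖leftSingularVector M i‖ ≤ 1 := by
  rw [leftSingularVector, norm_smul, norm_toEuclideanCLM_rightSingularBasis, ← Complex.ofReal_inv,
    Complex.norm_real, Real.norm_of_nonneg (inv_nonneg.mpr (singularValues_nonneg M i))]
  exact inv_mul_le_one_of_le₀ le_rfl (singularValues_nonneg M i)

lemma inner_leftSingularVector_toEuclideanCLM (M : Matrix (Fin d) (Fin d) ℂ) (i j : Fin d) :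
    ⟪leftSingularVector M i, 𝐓 M (rightSingularBasis M j)⟫_ℂ =
      if i = j then (singularValues M j : ℂ) else 0 := by
  rw [leftSingularVector, inner_smul_left, inner_toEuclideanCLM_rightSingularBasis,
    ← Complex.ofReal_inv, Complex.conj_ofReal]
  split_ifs with h
  · subst h
    by_cases h0 : singularValues M i = 0
    · simp [h0]
    · rw [sq, ← mul_assoc, ← Complex.ofReal_mul, inv_mul_cancel₀ h0, Complex.ofReal_one, one_mul]
  · rw [mul_zero]

lemma orthonormal_leftSingularVector (M : Matrix (Fin d) (Fin d) ℂ) :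
    Orthonormal ℂ (fun i : {i // singularValues M i ≠ 0} => leftSingularVector M i) := by
  rw [orthonormal_iff_ite]
  intro i j
  conv_lhs => arg 3; rw [leftSingularVector]
  rw [inner_smul_right, inner_leftSingularVector_toEuclideanCLM]
  by_cases h : i = j
  · subst h
    rw [if_pos rfl, if_pos rfl, ← Complex.ofReal_inv, ← Complex.ofReal_mul, inv_mul_cancel₀ i.2,
      Complex.ofReal_one]
  · rw [if_neg (Subtype.coe_ne_coe.mpr h), if_neg h, mul_zero]

lemma toEuclideanCLM_eq_sum_leftSingularVector (M : Matrix (Fin d) (Fin d) ℂ)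
    (x : EuclideanSpace ℂ (Fin d)) :
    𝐓 M x = ∑ j, (⟪rightSingularBasis M j, x⟫_ℂ * singularValues M j) • leftSingularVector M j := by
  conv_lhs => rw [← (rightSingularBasis M).sum_repr' x]
  simp only [map_sum, map_smul, toEuclideanCLM_rightSingularBasis, smul_smul]

-- Expand `M (v i)` along the singular vectors, then use AM–GM and Bessel's inequality for `u`, `v`.
lemma sum_norm_inner_le_sum_singularValues {ι : Type*} [Fintype ι] (M : Matrix (Fin d) (Fin d) ℂ)
    {u v : ι → EuclideanSpace ℂ (Fin d)} (hu : Orthonormal ℂ u) (hv : Orthonormal ℂ v) :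
    ∑ i, ‖⟪u i, 𝐓 M (v i)⟫_ℂ‖ ≤ ∑ j, singularValues M j := by
  set s := singularValues M
  set w := leftSingularVector M
  set z := rightSingularBasis M
  have hterm : ∀ i, ‖⟪u i, 𝐓 M (v i)⟫_ℂ‖
      ≤ ∑ j, s j * ((‖⟪u i, w j⟫_ℂ‖ ^ 2 + ‖⟪v i, z j⟫_ℂ‖ ^ 2) / 2) := by
    intro i
    rw [toEuclideanCLM_eq_sum_leftSingularVector, inner_sum]
    refine (norm_sum_le _ _).trans (Finset.sum_le_sum fun j _ => ?_)
    rw [inner_smul_right, norm_mul, norm_mul, Complex.norm_real,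
      Real.norm_of_nonneg (singularValues_nonneg M j), norm_inner_symm]
    nlinarith [two_mul_le_add_sq ‖⟪u i, w j⟫_ℂ‖ ‖⟪v i, z j⟫_ℂ‖, singularValues_nonneg M j]
  have hw : ∀ j, ∑ i, ‖⟪u i, w j⟫_ℂ‖ ^ 2 ≤ 1 := fun j =>
    (hu.sum_inner_products_le (w j)).trans
      (pow_le_one₀ (norm_nonneg _) (norm_leftSingularVector_le_one M j))
  have hz : ∀ j, ∑ i, ‖⟪v i, z j⟫_ℂ‖ ^ 2 ≤ 1 := fun j =>
    (hv.sum_inner_products_le (z j)).trans (by rw [z.orthonormal.1 j, one_pow])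
  calc ∑ i, ‖⟪u i, 𝐓 M (v i)⟫_ℂ‖
      ≤ ∑ i, ∑ j, s j * ((‖⟪u i, w j⟫_ℂ‖ ^ 2 + ‖⟪v i, z j⟫_ℂ‖ ^ 2) / 2) :=
        Finset.sum_le_sum fun i _ => hterm i
    _ = ∑ j, s j * ((∑ i, ‖⟪u i, w j⟫_ℂ‖ ^ 2 + ∑ i, ‖⟪v i, z j⟫_ℂ‖ ^ 2) / 2) := by
        rw [Finset.sum_comm]
        simp only [← Finset.mul_sum, ← Finset.sum_div, Finset.sum_add_distrib]
    _ ≤ ∑ j, s j := by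
        refine Finset.sum_le_sum fun j _ => ?_
        nlinarith [hw j, hz j, singularValues_nonneg M j]

lemma exists_orthonormal_sum_singularValues_eq (M : Matrix (Fin d) (Fin d) ℂ) :
    ∃ (ι : Type) (_ : Fintype ι) (u v : ι → EuclideanSpace ℂ (Fin d)),
      Orthonormal ℂ u ∧ Orthonormal ℂ v ∧
        ∑ j, singularValues M j = ∑ i, (⟪u i, 𝐓 M (v i)⟫_ℂ).re := by
  classical
  refine ⟨{j // singularValues M j ≠ 0}, inferInstance, fun j => leftSingularVector M j,
    fun j => rightSingularBasis M j, orthonormal_leftSingularVector M,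
    (rightSingularBasis M).orthonormal.comp _ Subtype.val_injective, ?_⟩
  simp only [inner_leftSingularVector_toEuclideanCLM, if_pos, Complex.ofReal_re]
  rw [← Finset.sum_filter_of_ne fun _ _ h => h]
  exact Finset.sum_subtype _ (by simp) _

lemma schattenNorm_one_sub_le (A B : Matrix (Fin d) (Fin d) ℂ) :
    schattenNorm 1 (A - B) ≤ schattenNorm 1 A + schattenNorm 1 B := by
  obtain ⟨ι, _, u, v, hu, hv, hsum⟩ := exists_orthonormal_sum_singularValues_eq (A - B)
  simp only [schattenNorm_one_eq_sum_singularValues, hsum]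
  calc ∑ i, (⟪u i, 𝐓 (A - B) (v i)⟫_ℂ).re
      ≤ ∑ i, (‖⟪u i, 𝐓 A (v i)⟫_ℂ‖ + ‖⟪u i, 𝐓 B (v i)⟫_ℂ‖) := by
        refine Finset.sum_le_sum fun i _ => ?_
        rw [map_sub, _root_.sub_apply, inner_sub_right]
        exact (Complex.re_le_norm _).trans (norm_sub_le _ _)
    _ ≤ _ := by
        rw [Finset.sum_add_distrib]
        exact add_le_add (sum_norm_inner_le_sum_singularValues A hu hv)
          (sum_norm_inner_le_sum_singularValues B hu hv)

lemma schattenNorm_one_unitary_conj_le (N : Matrix (Fin d) (Fin d) ℂ)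
    {V : Matrix (Fin d) (Fin d) ℂ} (hV : V ∈ unitaryGroup (Fin d) ℂ) :
    schattenNorm 1 (V * N * Vᴴ) ≤ schattenNorm 1 N := by
  classical
  obtain ⟨ι, _, u, v, hu, hv, hsum⟩ := exists_orthonormal_sum_singularValues_eq (V * N * Vᴴ)
  have hV' : Vᴴ ∈ unitaryGroup (Fin d) ℂ := Unitary.star_mem hV
  have hpres : ∀ {w : ι → EuclideanSpace ℂ (Fin d)}, Orthonormal ℂ w →
      Orthonormal ℂ (fun i => 𝐓 Vᴴ (w i)) := fun hw =>
    orthonormal_iff_ite.mpr fun i j => by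
      rw [inner_toEuclideanCLM_unitary hV', orthonormal_iff_ite.mp hw]
  rw [schattenNorm_one_eq_sum_singularValues, schattenNorm_one_eq_sum_singularValues, hsum]
  calc ∑ i, (⟪u i, 𝐓 (V * N * Vᴴ) (v i)⟫_ℂ).re
      = ∑ i, (⟪𝐓 Vᴴ (u i), 𝐓 N (𝐓 Vᴴ (v i))⟫_ℂ).re := by
        simp only [map_mul, mul_apply_eq_comp, ← inner_toEuclideanCLM_conjTranspose,
          conjTranspose_conjTranspose]
    _ ≤ ∑ i, ‖⟪𝐓 Vᴴ (u i), 𝐓 N (𝐓 Vᴴ (v i))⟫_ℂ‖ :=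
        Finset.sum_le_sum fun i _ => Complex.re_le_norm _
    _ ≤ _ := sum_norm_inner_le_sum_singularValues N (hpres hu) (hpres hv)

noncomputable def coordProj (d k : ℕ) : Matrix (Fin d) (Fin d) ℂ :=
  diagonal fun i => if (i : ℕ) < k then 1 else 0

lemma coordProj_conjTranspose (k : ℕ) : (coordProj d k)ᴴ = coordProj d k := by
  rw [coordProj, diagonal_conjTranspose]
  congr 1
  ext i
  by_cases h : (i : ℕ) < k <;> simp [h]

lemma coordProj_mul_self (k : ℕ) : coordProj d k * coordProj d k = coordProj d k := by
  rw [coordProj, diagonal_mul_diagonal]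
  congr 1
  ext i
  by_cases h : (i : ℕ) < k <;> simp [h]

lemma rank_coordProj_le (k : ℕ) : (coordProj d k).rank ≤ k := by
  rw [coordProj, rank_diagonal]
  refine (Fintype.card_le_of_injective (fun i => (⟨i.1, ?_⟩ : Fin k)) fun i j h => ?_).trans_eq
    (Fintype.card_fin k)
  · by_contra hik
    exact i.2 (if_neg hik)
  · exact Subtype.ext (Fin.ext (Fin.mk.inj_iff.mp h))

lemma diagonal_truncate_sub_eq (k : ℕ) (α : Fin d → ℂ) (σ : Matrix (Fin d) (Fin d) ℂ) :
    diagonal (fun i : Fin d => if (i : ℕ) < k then α i else 0) - σ =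
      (coordProj d k * (diagonal α - σ) + (1 - coordProj d k) * (diagonal α - σ) * coordProj d k)
        - (1 - coordProj d k) * σ * (1 - coordProj d k) := by
  ext i j
  by_cases hi : (i : ℕ) < k <;> by_cases hj : (j : ℕ) < k <;> by_cases hij : i = j <;>
    simp [coordProj, sub_mul, mul_sub, hi, hj, hij]

lemma schattenNorm_two_coordProj_mul_add_le (k : ℕ) (X : Matrix (Fin d) (Fin d) ℂ) :
    schattenNorm 2 (coordProj d k * X + (1 - coordProj d k) * X * coordProj d k)
      ≤ schattenNorm 2 X := by
  refine schattenNorm_two_le_of_forall_eq_zero_or_eq fun i j => ?_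
  by_cases hi : (i : ℕ) < k <;> by_cases hj : (j : ℕ) < k <;>
    simp [coordProj, sub_mul, hi, hj]

lemma rank_coordProj_mul_add_le (k : ℕ) (X : Matrix (Fin d) (Fin d) ℂ) :
    (coordProj d k * X + (1 - coordProj d k) * X * coordProj d k).rank ≤ 2 * k := by
  have h₁ := (rank_mul_le_left (coordProj d k) X).trans (rank_coordProj_le k)
  have h₂ := (rank_mul_le_right ((1 - coordProj d k) * X) _).trans (rank_coordProj_le k)
  exact (rank_add_le _ _).trans (by omega)

lemma schattenNorm_one_coordProj_mul_add_le (k : ℕ) (X : Matrix (Fin d) (Fin d) ℂ) :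
    schattenNorm 1 (coordProj d k * X + (1 - coordProj d k) * X * coordProj d k)
      ≤ √(2 * k) * schattenNorm 2 X := by
  refine (schattenNorm_one_le_sqrt_rank_mul_schattenNorm_two _).trans
    (mul_le_mul ?_ (schattenNorm_two_coordProj_mul_add_le k X) (schattenNorm_nonneg 2 _)
      (Real.sqrt_nonneg _))
  exact Real.sqrt_le_sqrt (mod_cast rank_coordProj_mul_add_le k X)

lemma re_trace_compl_coordProj_conj (k : ℕ) (σ : Matrix (Fin d) (Fin d) ℂ) :
    ((1 - coordProj d k) * σ * (1 - coordProj d k)).trace.re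
      = σ.trace.re - (coordProj d k * σ).trace.re := by
  have hQ : (1 - coordProj d k) * (1 - coordProj d k) = 1 - coordProj d k := by
    rw [sub_mul, mul_sub, mul_sub, coordProj_mul_self]; simp
  rw [trace_mul_cycle, hQ, sub_mul, one_mul, trace_sub, Complex.sub_re]

end SingularValues

theorem truncation_trace_norm_bound_general (d k : ℕ)
    (ρ : Matrix (Fin d) (Fin d) ℂ) (hρ : ρ.PosSemidef) (hρtr : ρ.trace = 1)
    (U : Matrix (Fin d) (Fin d) ℂ) (hU : U ∈ Matrix.unitaryGroup (Fin d) ℂ)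
    (α : Fin d → ℝ)
    (Pk : Matrix (Fin d) (Fin d) ℂ)
    (hPk : Pk = Matrix.diagonal (fun i : Fin d => if (i : ℕ) < k then (1 : ℂ) else 0)) :
    schattenNorm 1
        (U * Matrix.diagonal (fun i : Fin d => if (i : ℕ) < k then (α i : ℂ) else 0) * Uᴴ - ρ)
      ≤ Real.sqrt (2 * k) * schattenNorm 2 (Matrix.diagonal (fun i => (α i : ℂ)) - Uᴴ * ρ * U)
        + 1 - (Pk * (Uᴴ * ρ * U)).trace.re := by
  set σ := Uᴴ * ρ * U
  set X := diagonal (fun i => (α i : ℂ)) - σ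
  set Q := 1 - coordProj d k
  have hUU : U * Uᴴ = 1 := Unitary.mul_star_self_of_mem hU
  have hρσ : ρ = U * σ * Uᴴ := by
    simp only [σ, ← mul_assoc, hUU, one_mul]
    rw [mul_assoc, hUU, mul_one]
  have hσtr : σ.trace = 1 := by
    rw [trace_mul_cycle, hUU, one_mul, hρtr]
  have hR : (Q * σ * Q).PosSemidef := by
    simpa [Q, conjTranspose_sub, coordProj_conjTranspose] using
      (hρ.conjTranspose_mul_mul_same U).conjTranspose_mul_mul_same Q
  calc _ = schattenNorm 1 (U * ((coordProj d k * X + Q * X * coordProj d k) - Q * σ * Q) * Uᴴ) := by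
        rw [← diagonal_truncate_sub_eq, mul_sub, sub_mul, ← hρσ]
    _ ≤ schattenNorm 1 (coordProj d k * X + Q * X * coordProj d k) + schattenNorm 1 (Q * σ * Q) :=
        (schattenNorm_one_unitary_conj_le _ hU).trans (schattenNorm_one_sub_le _ _)
    _ ≤ √(2 * k) * schattenNorm 2 X + (1 - (coordProj d k * σ).trace.re) := by
        rw [hR.schattenNorm_one_eq_re_trace, re_trace_compl_coordProj_conj, hσtr, Complex.one_re]
        exact add_le_add_left (schattenNorm_one_coordProj_mul_add_le k X) _
    _ = _ := by rw [hPk, coordProj, add_sub_assoc]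

/-- For a density matrix `ρ`, a unitary `U`, non-increasing non-negative `α`, and `Π` the
diagonal projection onto the first `k` standard basis vectors,
`‖U diag(α₀,…,α_{k-1},0,…,0) Uᴴ - ρ‖₁ ≤ √(2k) ‖diag(α) - Uᴴ ρ U‖₂ + 1 - tr(Π Uᴴ ρ U)`. -/
theorem truncation_trace_norm_bound (d k : ℕ) (hk1 : 1 ≤ k) (hkd : k ≤ d)
    (ρ : Matrix (Fin d) (Fin d) ℂ) (hρ : ρ.PosSemidef) (hρtr : ρ.trace = 1)
    (U : Matrix (Fin d) (Fin d) ℂ) (hU : U ∈ Matrix.unitaryGroup (Fin d) ℂ)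
    (α : Fin d → ℝ) (hα : Antitone α) (hαnn : ∀ i, 0 ≤ α i)
    (Pk : Matrix (Fin d) (Fin d) ℂ)
    (hPk : Pk = Matrix.diagonal (fun i : Fin d => if (i : ℕ) < k then (1 : ℂ) else 0)) :
    schattenNorm 1
        (U * Matrix.diagonal (fun i : Fin d => if (i : ℕ) < k then (α i : ℂ) else 0) * Uᴴ - ρ)
      ≤ Real.sqrt (2 * k) * schattenNorm 2 (Matrix.diagonal (fun i => (α i : ℂ)) - Uᴴ * ρ * U)
        + 1 - (Pk * (Uᴴ * ρ * U)).trace.re :=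
  truncation_trace_norm_bound_general d k ρ hρ hρtr U hU α Pk hPk
end
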